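/- arXiv:2305.17327 — 2 statements merged into one kernel-verified Lean document; each statement's English description precedes it below -/
import Mathlib

section
/- Let Z be a finite set, σ : Z → ℝ≥0 a probability distribution on Z, q : Z → ℝ>0 a fully-supported probability distribution on Z, and for each z ∈ Z let V_z be a real-valued random variable. Let ζ ~ q be sampled independently of the V_z, and define Y = Σ_{z∈Z} σ(z)·[ (1{ζ=z}/q(z))·(V_z - b(z)) + b(z) ] where b : Z → ℝ. Then Var(Y) = Σ_{z∈Z} (σ(z)²/q(z))·Var(V_z) + Var_{z~q}[ (σ(z)/q(z))·(E[V_z] - b(z)) ]. -/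
/-!
Up to the constant `∑ z, σ z * b z`, the estimator is `F ζ V` with
`F z v = σ z / q z * (v z - b z)`. Since `ζ` is independent of `V`, every moment of `F ζ V` is the
`q`-average of the corresponding moment of `F z V` (conditioning on the sampled branch). Writing
`E[(V z - b z)²] = Var[V z] + (E[V z] - b z)²` then splits the second moment into the
within-branch variances and the variance over `z ~ q` of the branch means.
-/

open MeasureTheory ProbabilityTheory

lemma apply_eq_sum_indicator_preimage {Ω Z β : Type*} [Fintype Z]
    (ζ : Ω → Z) (X : Ω → β) (F : Z → β → ℝ) (ω : Ω) :
    F (ζ ω) (X ω) = ∑ z, (ζ ⁻¹' {z}).indicator (fun ω ↦ F z (X ω)) ω := by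
  classical
  simp [Set.indicator_apply, eq_comm (a := ζ ω)]

section BranchSampling

variable {Ω Z β : Type*} [MeasurableSpace Ω] {μ : Measure Ω}
  [Fintype Z] [MeasurableSpace Z] [MeasurableSingletonClass Z]
  {ζ : Ω → Z} {X : Ω → β} {F : Z → β → ℝ}

lemma memLp_apply_of_forall_memLp {p : ENNReal} (hζ : Measurable ζ)
    (hF : ∀ z, MemLp (fun ω ↦ F z (X ω)) p μ) :
    MemLp (fun ω ↦ F (ζ ω) (X ω)) p μ := by
  simp_rw [apply_eq_sum_indicator_preimage ζ X F]
  exact memLp_finsetSum _ fun z _ ↦ (hF z).indicator (hζ (measurableSet_singleton z))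

lemma ProbabilityTheory.IndepFun.integral_apply_eq_sum [MeasurableSpace β] (hζ : Measurable ζ)
    (hind : IndepFun ζ X μ) (hFm : ∀ z, Measurable (F z))
    (hF : ∀ z, Integrable (fun ω ↦ F z (X ω)) μ) :
    ∫ ω, F (ζ ω) (X ω) ∂μ = ∑ z, μ.real (ζ ⁻¹' {z}) * ∫ ω, F z (X ω) ∂μ := by
  simp_rw [apply_eq_sum_indicator_preimage ζ X F]
  rw [integral_finsetSum _ fun z _ ↦ (hF z).indicator (hζ (measurableSet_singleton z))]
  refine Finset.sum_congr rfl fun z _ ↦ ?_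
  have hz : MeasurableSet (ζ ⁻¹' {z}) := hζ (measurableSet_singleton z)
  have hpre : ({z} : Set Z).indicator (1 : Z → ℝ) ∘ ζ = (ζ ⁻¹' {z}).indicator 1 := by
    ext ω; by_cases hω : ζ ω = z <;> simp [hω]
  have hindz : IndepFun ((ζ ⁻¹' {z}).indicator 1) (fun ω ↦ F z (X ω)) μ :=
    hpre ▸ hind.comp (φ := ({z} : Set Z).indicator (1 : Z → ℝ))
      (measurable_one.indicator (measurableSet_singleton z)) (hFm z)
  calc ∫ ω, (ζ ⁻¹' {z}).indicator (fun ω ↦ F z (X ω)) ω ∂μ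
      = ∫ ω, (ζ ⁻¹' {z}).indicator 1 ω * F z (X ω) ∂μ := by
        congr with ω; by_cases hω : ζ ω = z <;> simp [hω]
    _ = μ.real (ζ ⁻¹' {z}) * ∫ ω, F z (X ω) ∂μ := by
        rw [hindz.integral_fun_mul_eq_mul_integral
          (measurable_one.indicator hz).aestronglyMeasurable (hF z).aestronglyMeasurable,
          integral_indicator_one hz]

lemma ProbabilityTheory.IndepFun.variance_apply_eq_sum [IsProbabilityMeasure μ]
    [MeasurableSpace β] (hζ : Measurable ζ) (hind : IndepFun ζ X μ)
    (hFm : ∀ z, Measurable (F z)) (hF : ∀ z, MemLp (fun ω ↦ F z (X ω)) 2 μ) :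
    variance (fun ω ↦ F (ζ ω) (X ω)) μ =
      ∑ z, μ.real (ζ ⁻¹' {z}) * ∫ ω, F z (X ω) ^ 2 ∂μ -
        (∑ z, μ.real (ζ ⁻¹' {z}) * ∫ ω, F z (X ω) ∂μ) ^ 2 := by
  rw [variance_eq_sub (memLp_apply_of_forall_memLp hζ hF)]
  simp only [Pi.pow_apply]
  rw [hind.integral_apply_eq_sum (F := fun z x ↦ F z x ^ 2) hζ (fun z ↦ (hFm z).pow_const 2)
      fun z ↦ (hF z).integrable_sq,
    hind.integral_apply_eq_sum hζ hFm fun z ↦ (hF z).integrable one_le_two]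

end BranchSampling

lemma integral_sub_const_sq {Ω : Type*} [MeasurableSpace Ω] {μ : Measure Ω}
    [IsProbabilityMeasure μ] {X : Ω → ℝ} (hX : MemLp X 2 μ) (c : ℝ) :
    ∫ ω, (X ω - c) ^ 2 ∂μ = variance X μ + (∫ ω, X ω ∂μ - c) ^ 2 := by
  have h := variance_eq_sub (X := fun ω ↦ X ω - c) (hX.sub (memLp_const c))
  rw [variance_sub_const hX.aestronglyMeasurable c] at h
  rw [h, integral_sub (hX.integrable one_le_two) (integrable_const c)]
  simp

lemma sum_baseline_corrected_eq {Z K : Type*} [Fintype Z] [DecidableEq Z] [Field K]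
    (σ q b v : Z → K) (z₀ : Z) :
    ∑ z, σ z * ((if z₀ = z then (1 : K) else 0) / q z * (v z - b z) + b z) =
      σ z₀ / q z₀ * (v z₀ - b z₀) + ∑ z, σ z * b z := by
  simp only [mul_add, Finset.sum_add_distrib, ite_div, ite_mul, mul_ite, zero_div, zero_mul,
    mul_zero, Finset.sum_ite_eq, Finset.mem_univ, if_true]
  ring

theorem one_step_outcome_sampling_variance_general
    {Ω : Type*} [MeasurableSpace Ω] (μ : Measure Ω) [IsProbabilityMeasure μ]
    {Z : Type*} [Fintype Z] [DecidableEq Z] [MeasurableSpace Z]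
    [MeasurableSingletonClass Z]
    (σ q : Z → ℝ) (b : Z → ℝ) (V : Z → Ω → ℝ) (ζ : Ω → Z)
    (hq0 : ∀ z, 0 < q z)
    (hζ : Measurable ζ)
    (hζlaw : ∀ z, μ {ω | ζ ω = z} = ENNReal.ofReal (q z))
    (hindep : IndepFun ζ (fun ω => fun z => V z ω) μ)
    (hV2 : ∀ z, MemLp (V z) 2 μ) :
    variance (fun ω => ∑ z, σ z *
        ((if ζ ω = z then (1 : ℝ) else 0) / q z * (V z ω - b z) + b z)) μ =
      (∑ z, (σ z ^ 2 / q z) * variance (V z) μ) +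
        ((∑ z, q z * ((σ z / q z) * ((∫ ω, V z ω ∂μ) - b z)) ^ 2) -
          (∑ z, q z * ((σ z / q z) * ((∫ ω, V z ω ∂μ) - b z))) ^ 2) := by
  set F : Z → (Z → ℝ) → ℝ := fun z v ↦ σ z / q z * (v z - b z)
  have hlaw (z : Z) : μ.real (ζ ⁻¹' {z}) = q z := by
    rw [measureReal_def, show ζ ⁻¹' {z} = {ω | ζ ω = z} from rfl, hζlaw z,
      ENNReal.toReal_ofReal (hq0 z).le]
  have hFV (z : Z) : MemLp (fun ω ↦ F z (fun z ↦ V z ω)) 2 μ :=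
    ((hV2 z).sub (memLp_const (b z))).const_mul (σ z / q z)
  have hFmean (z : Z) :
      ∫ ω, F z (fun z ↦ V z ω) ∂μ = σ z / q z * (∫ ω, V z ω ∂μ - b z) := by
    simp only [F]
    rw [integral_const_mul, integral_sub ((hV2 z).integrable one_le_two) (integrable_const _),
      integral_const, probReal_univ, one_smul]
  have hFsq (z : Z) : ∫ ω, F z (fun z ↦ V z ω) ^ 2 ∂μ =
      (σ z / q z) ^ 2 * (variance (V z) μ + (∫ ω, V z ω ∂μ - b z) ^ 2) := by
    simp only [F, mul_pow]
    rw [integral_const_mul, integral_sub_const_sq (hV2 z)]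
  have hsplit (z : Z) :
      q z * ((σ z / q z) ^ 2 * (variance (V z) μ + (∫ ω, V z ω ∂μ - b z) ^ 2)) =
        σ z ^ 2 / q z * variance (V z) μ + q z * (σ z / q z * (∫ ω, V z ω ∂μ - b z)) ^ 2 := by
    field_simp [(hq0 z).ne']
  simp_rw [sum_baseline_corrected_eq σ q b (fun z ↦ V z _)]
  rw [variance_add_const (memLp_apply_of_forall_memLp hζ hFV).aestronglyMeasurable,
    hindep.variance_apply_eq_sum hζ (by fun_prop) hFV]
  simp only [hlaw, hFmean, hFsq, hsplit, Finset.sum_add_distrib]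
  ring

theorem one_step_outcome_sampling_variance
    {Ω : Type*} [MeasurableSpace Ω] (μ : Measure Ω) [IsProbabilityMeasure μ]
    {Z : Type*} [Fintype Z] [DecidableEq Z] [MeasurableSpace Z]
    [MeasurableSingletonClass Z]
    (σ q : Z → ℝ) (b : Z → ℝ) (V : Z → Ω → ℝ) (ζ : Ω → Z)
    (hσ0 : ∀ z, 0 ≤ σ z) (hσ1 : ∑ z, σ z = 1)
    (hq0 : ∀ z, 0 < q z) (hq1 : ∑ z, q z = 1)
    (hζ : Measurable ζ)
    (hζlaw : ∀ z, μ {ω | ζ ω = z} = ENNReal.ofReal (q z))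
    (hindep : IndepFun ζ (fun ω => fun z => V z ω) μ)
    (hV2 : ∀ z, MemLp (V z) 2 μ) :
    variance (fun ω => ∑ z, σ z *
        ((if ζ ω = z then (1 : ℝ) else 0) / q z * (V z ω - b z) + b z)) μ =
      (∑ z, (σ z ^ 2 / q z) * variance (V z) μ) +
        ((∑ z, q z * ((σ z / q z) * ((∫ ω, V z ω ∂μ) - b z)) ^ 2) -
          (∑ z, q z * ((σ z / q z) * ((∫ ω, V z ω ∂μ) - b z))) ^ 2) :=
  one_step_outcome_sampling_variance_general μ σ q b V ζ hq0 hζ hζlaw hindep hV2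
end

section
/- (Regret matching bound.) Let A be a finite nonempty set, and let u^t : A → ℝ for t = 1,…,T be payoff functions with range bounded by Δ, i.e. max_{a,a'} (u^t(a) - u^t(a')) ≤ Δ for all t. Define strategies σ^t : A → [0,1] recursively by regret matching: σ^t(a) = R^{t-1,+}(a)/μ if μ = Σ_{a'} R^{t-1,+}(a') > 0 and σ^t(a) = 1/|A| otherwise, where R^t(a) = (1/t)·Σ_{s=1}^t [u^s(a) - Σ_{a'} σ^s(a')·u^s(a')] and R^{t,+} = max(R^t, 0). Then max_{a∈A} R^T(a) ≤ Δ·√|A| / √T. -/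
/-!
Blackwell's potential argument. Write `r^t(a) = u^t(a) - ⟨σ^t, u^t⟩` for the instantaneous regret
and `S^t = t R^t` for the cumulative one. Expanding the square shows that
`Φ_t = ∑_a ((S^t(a))⁺)²` grows in round `t` by at most `2 ⟨(S^{t-1})⁺, r^t⟩ + ∑_a (r^t(a))²`.
Regret matching plays `σ^t ∝ (S^{t-1})⁺`, and `⟨σ^t, r^t⟩ = 0`, so the cross term vanishes, while
`|r^t(a)| ≤ Δ`. Hence `(T R^T(a))² ≤ Φ_T ≤ |A| Δ² T`.
-/

open Finset

lemma sq_max_add_le (x y : ℝ) :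
    max (x + y) 0 ^ 2 ≤ max x 0 ^ 2 + 2 * max x 0 * y + y ^ 2 := by
  have h : max (x + y) 0 ≤ |max x 0 + y| :=
    max_le ((add_le_add_left (le_max_left x 0) y).trans (le_abs_self _)) (abs_nonneg _)
  calc max (x + y) 0 ^ 2 ≤ |max x 0 + y| ^ 2 := pow_le_pow_left₀ (le_max_right _ _) h 2
    _ = _ := by rw [sq_abs]; ring

theorem sum_sq_max_sum_Icc_le {ι : Type*} [Fintype ι] (r : ℕ → ι → ℝ) (B : ℝ) (T : ℕ)
    (hsq : ∀ t ∈ Icc 1 T, ∑ i, r t i ^ 2 ≤ B)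
    (hcross : ∀ t ∈ Icc 1 T, ∑ i, max (∑ s ∈ Icc 1 (t - 1), r s i) 0 * r t i ≤ 0) :
    ∑ i, max (∑ s ∈ Icc 1 T, r s i) 0 ^ 2 ≤ B * T := by
  induction T with
  | zero => simp
  | succ n ih =>
    have hmem : n + 1 ∈ Icc 1 (n + 1) := by simp
    have hsub : Icc 1 n ⊆ Icc 1 (n + 1) := Icc_subset_Icc_right n.le_succ
    have hprev := ih (fun t ht => hsq t (hsub ht)) (fun t ht => hcross t (hsub ht))
    have hnext := hcross (n + 1) hmem
    rw [Nat.add_sub_cancel] at hnext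
    calc ∑ i, max (∑ s ∈ Icc 1 (n + 1), r s i) 0 ^ 2
        ≤ ∑ i, (max (∑ s ∈ Icc 1 n, r s i) 0 ^ 2
            + 2 * (max (∑ s ∈ Icc 1 n, r s i) 0 * r (n + 1) i) + r (n + 1) i ^ 2) := by
          gcongr with i
          rw [sum_Icc_succ_top (by omega), ← mul_assoc]
          exact sq_max_add_le _ _
      _ = ∑ i, max (∑ s ∈ Icc 1 n, r s i) 0 ^ 2
            + 2 * ∑ i, max (∑ s ∈ Icc 1 n, r s i) 0 * r (n + 1) i
            + ∑ i, r (n + 1) i ^ 2 := by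
          rw [sum_add_distrib, sum_add_distrib, mul_sum]
      _ ≤ B * n + 2 * 0 + B := by gcongr; exact hsq (n + 1) hmem
      _ = B * ↑(n + 1) := by push_cast; ring

section Payoff

variable {ι : Type*} [Fintype ι] {p u : ι → ℝ}

lemma sum_mul_sub_sum_mul_eq_zero (hp : ∑ i, p i = 1) :
    ∑ i, p i * (u i - ∑ j, p j * u j) = 0 := by
  simp only [mul_sub, sum_sub_distrib, ← sum_mul, hp, one_mul, sub_self]

lemma abs_sub_sum_mul_le {Δ : ℝ} (hp0 : ∀ i, 0 ≤ p i) (hp1 : ∑ i, p i = 1)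
    (hu : ∀ i j, u i - u j ≤ Δ) (i : ι) : |u i - ∑ j, p j * u j| ≤ Δ := by
  have hmix : u i - ∑ j, p j * u j = ∑ j, p j * (u i - u j) := by
    simp only [mul_sub, sum_sub_distrib, ← sum_mul, hp1, one_mul]
  rw [hmix, abs_le]
  constructor
  · calc -Δ = ∑ j, p j * -Δ := by rw [← sum_mul, hp1, one_mul]
      _ ≤ _ := sum_le_sum fun j _ =>
        mul_le_mul_of_nonneg_left (by linarith [hu j i]) (hp0 j)
  · calc ∑ j, p j * (u i - u j) ≤ ∑ j, p j * Δ :=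
        sum_le_sum fun j _ => mul_le_mul_of_nonneg_left (hu i j) (hp0 j)
      _ = Δ := by rw [← sum_mul, hp1, one_mul]

lemma sum_sq_sub_sum_mul_le {Δ : ℝ} (hp0 : ∀ i, 0 ≤ p i) (hp1 : ∑ i, p i = 1)
    (hu : ∀ i j, u i - u j ≤ Δ) : ∑ i, (u i - ∑ j, p j * u j) ^ 2 ≤ Δ ^ 2 * Fintype.card ι := by
  calc ∑ i, (u i - ∑ j, p j * u j) ^ 2 ≤ ∑ _i : ι, Δ ^ 2 := by
        refine sum_le_sum fun i _ => ?_
        obtain ⟨hlo, hhi⟩ := abs_le.mp (abs_sub_sum_mul_le hp0 hp1 hu i)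
        exact sq_le_sq' hlo hhi
    _ = Δ ^ 2 * Fintype.card ι := by simp [mul_comm]

end Payoff

section RegretMatching

variable {ι : Type*} [Fintype ι] (w : ι → ℝ)

noncomputable def regretMatching : ι → ℝ := fun i =>
  if 0 < ∑ j, w j then w i / ∑ j, w j else 1 / (Fintype.card ι : ℝ)

variable {w}

lemma regretMatching_nonneg (hw : ∀ i, 0 ≤ w i) (i : ι) : 0 ≤ regretMatching w i := by
  unfold regretMatching
  split_ifs with h
  · exact div_nonneg (hw i) h.le
  · positivity

lemma sum_regretMatching [Nonempty ι] (w : ι → ℝ) : ∑ i, regretMatching w i = 1 := by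
  unfold regretMatching
  split_ifs with h
  · rw [← sum_div, div_self h.ne']
  · rw [sum_const, card_univ, nsmul_eq_mul, mul_one_div_cancel (by positivity)]

lemma sum_mul_regretMatching (hw : ∀ i, 0 ≤ w i) (i : ι) :
    (∑ j, w j) * regretMatching w i = w i := by
  unfold regretMatching
  split_ifs with h
  · exact mul_div_cancel₀ _ h.ne'
  · have hzero : ∑ j, w j = 0 := le_antisymm (not_lt.mp h) (sum_nonneg fun j _ => hw j)
    rw [hzero, zero_mul, eq_comm]
    exact (sum_eq_zero_iff_of_nonneg fun j _ => hw j).mp hzero i (mem_univ i)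

lemma sum_mul_sub_sum_regretMatching_mul_eq_zero [Nonempty ι] (hw : ∀ i, 0 ≤ w i)
    (u : ι → ℝ) : ∑ i, w i * (u i - ∑ j, regretMatching w j * u j) = 0 := by
  calc ∑ i, w i * (u i - ∑ j, regretMatching w j * u j)
      = (∑ j, w j) * ∑ i, regretMatching w i * (u i - ∑ j, regretMatching w j * u j) := by
        rw [mul_sum]
        exact sum_congr rfl fun i _ => by rw [← mul_assoc, sum_mul_regretMatching hw]
    _ = 0 := by rw [sum_mul_sub_sum_mul_eq_zero (sum_regretMatching w), mul_zero]

lemma sum_max_mul_mul_sub_sum_regretMatching_mul_eq_zero [Nonempty ι] {k : ℝ} (hk : 0 ≤ k)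
    (v u : ι → ℝ) :
    ∑ i, max (k * v i) 0 * (u i - ∑ j, regretMatching (fun j => max (v j) 0) j * u j) = 0 := by
  have hscale : ∀ i, max (k * v i) 0 = k * max (v i) 0 := fun i => by
    rw [mul_max_of_nonneg _ _ hk, mul_zero]
  simp only [hscale, mul_assoc, ← mul_sum,
    sum_mul_sub_sum_regretMatching_mul_eq_zero fun i => le_max_right (v i) 0, mul_zero]

end RegretMatching

lemma div_le_mul_sqrt_div_sqrt {x Δ c T : ℝ} (hΔ : 0 ≤ Δ) (hc : 0 ≤ c) (hT : 0 ≤ T)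
    (h : max x 0 ^ 2 ≤ Δ ^ 2 * c * T) : 1 / T * x ≤ Δ * √c / √T := by
  have hx : x ≤ Δ * √c * √T := calc
    x ≤ max x 0 := le_max_left x 0
    _ ≤ √(Δ ^ 2 * c * T) := Real.le_sqrt_of_sq_le h
    _ = Δ * √c * √T := by
      rw [Real.sqrt_mul (by positivity), Real.sqrt_mul (sq_nonneg Δ), Real.sqrt_sq hΔ]
  calc 1 / T * x ≤ 1 / T * (Δ * √c * √T) := by gcongr
    _ = Δ * √c * (√T / T) := by ring
    _ = Δ * √c / √T := by rw [Real.sqrt_div_self', mul_one_div]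

theorem regret_matching_bound_general
    {A : Type*} [Fintype A] [Nonempty A]
    (T : ℕ) (hT : 1 ≤ T)
    (u : ℕ → A → ℝ) (σ : ℕ → A → ℝ) (R : ℕ → A → ℝ) (Δ : ℝ)
    (hΔ : ∀ t ∈ Finset.Icc 1 T, ∀ a a' : A, u t a - u t a' ≤ Δ)
    (hR : ∀ t, ∀ a : A, R t a =
      (1 / (t : ℝ)) * ∑ s ∈ Finset.Icc 1 t, (u s a - ∑ a', σ s a' * u s a'))
    (hσ : ∀ t ∈ Finset.Icc 1 T, ∀ a : A,
      σ t a =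
        if 0 < ∑ a', max (R (t - 1) a') 0 then
          max (R (t - 1) a) 0 / ∑ a', max (R (t - 1) a') 0
        else 1 / (Fintype.card A : ℝ)) :
    ∀ a : A, R T a ≤ Δ * Real.sqrt (Fintype.card A) / Real.sqrt T := by
  set r : ℕ → A → ℝ := fun t a => u t a - ∑ a', σ t a' * u t a' with hr
  have hσ' : ∀ t ∈ Icc 1 T, σ t = regretMatching fun a => max (R (t - 1) a) 0 :=
    fun t ht => funext (hσ t ht)
  have hcum : ∀ t a, ∑ s ∈ Icc 1 t, r s a = t * R t a := by
    intro t a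
    rcases t.eq_zero_or_pos with rfl | ht
    · simp
    · rw [hR, ← mul_assoc, mul_one_div_cancel (by positivity), one_mul]
  have hΔ0 : 0 ≤ Δ := by
    obtain ⟨a⟩ := ‹Nonempty A›
    simpa using hΔ 1 (by simp [hT]) a a
  have hpot : ∑ a, max (∑ s ∈ Icc 1 T, r s a) 0 ^ 2 ≤ Δ ^ 2 * Fintype.card A * T := by
    refine sum_sq_max_sum_Icc_le r _ T (fun t ht => ?_) (fun t ht => ?_)
    · simp only [hr, hσ' t ht]
      exact sum_sq_sub_sum_mul_le (regretMatching_nonneg fun a => le_max_right _ _)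
        (sum_regretMatching _) (hΔ t ht)
    · simp only [hcum]
      simp only [hr, hσ' t ht]
      exact (sum_max_mul_mul_sub_sum_regretMatching_mul_eq_zero (Nat.cast_nonneg _)
        (R (t - 1)) (u t)).le
  intro a
  rw [hR]
  exact div_le_mul_sqrt_div_sqrt hΔ0 (by positivity) (by positivity)
    ((single_le_sum (f := fun a => max (∑ s ∈ Icc 1 T, r s a) 0 ^ 2)
      (fun a _ => sq_nonneg _) (mem_univ a)).trans hpot)

theorem regret_matching_bound
    {A : Type*} [Fintype A] [Nonempty A] [DecidableEq A]
    (T : ℕ) (hT : 1 ≤ T)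
    (u : ℕ → A → ℝ) (σ : ℕ → A → ℝ) (R : ℕ → A → ℝ) (Δ : ℝ)
    (hΔ : ∀ t ∈ Finset.Icc 1 T, ∀ a a' : A, u t a - u t a' ≤ Δ)
    (hR : ∀ t, ∀ a : A, R t a =
      (1 / (t : ℝ)) * ∑ s ∈ Finset.Icc 1 t, (u s a - ∑ a', σ s a' * u s a'))
    (hσ : ∀ t ∈ Finset.Icc 1 T, ∀ a : A,
      σ t a =
        if 0 < ∑ a', max (R (t - 1) a') 0 then
          max (R (t - 1) a) 0 / ∑ a', max (R (t - 1) a') 0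
        else 1 / (Fintype.card A : ℝ)) :
    ∀ a : A, R T a ≤ Δ * Real.sqrt (Fintype.card A) / Real.sqrt T :=
  regret_matching_bound_general T hT u σ R Δ hΔ hR hσ
end
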